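/- arXiv:0710.1459 — 4 statements merged into one kernel-verified Lean document; each statement's English description precedes it below -/
import Mathlib

section
/- Assume a ∼_φ b, that the graph G_φ is a path, and that D = Σ_{j ∈ supp(b)} 1/(j·b_j) converges (D < ∞). Then for every n ≥ 0 and every λ ∈ 𝒜_n, every rewrite sequence from λ has length at most D·n. -/
open scoped BigOperators

/-- The size `|λ| = Σ_i i·m_i(λ)` of a partition, identified with its
multiplicity function (a finitely supported function `ℕ+ →₀ ℕ`). -/
def psize (lam : ℕ+ →₀ ℕ) : ℕ := lam.sum fun i m => (i : ℕ) * m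

/-- `λ ∈ 𝒜`: every multiplicity satisfies `m_i(λ) < a_i`
(automatic when `a_i = ∞`). -/
def InA (a : ℕ+ → ℕ∞) (lam : ℕ+ →₀ ℕ) : Prop := ∀ i, (lam i : ℕ∞) < a i

/-- `a ∼_φ b` : the sequences `a, b` take values in `{1,2,…} ∪ {∞}`,
`φ` is a bijection from `supp(a) = {i : a_i < ∞}` onto `supp(b) = {j : b_j < ∞}`,
and `i·a_i = φ(i)·b_{φ(i)}` for all `i ∈ supp(a)`. -/
def PhiEquiv (a b : ℕ+ → ℕ∞) (phi : ℕ+ → ℕ+) : Prop :=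
  (∀ i, a i ≠ 0) ∧ (∀ i, b i ≠ 0) ∧
  Set.BijOn phi {i | a i ≠ ⊤} {j | b j ≠ ⊤} ∧
  (∀ i, a i ≠ ⊤ → ((i : ℕ) : ℕ∞) * a i = ((phi i : ℕ) : ℕ∞) * b (phi i))

/-- One step `μ → μ'` of O'Hara's algorithm: for some `j ∈ supp(b)` with
`m_j(μ) ≥ b_j`, remove `b_j` parts equal to `j` and add `a_i` parts equal to
`i`, where `i = φ⁻¹(j)`. -/
def OStep (a b : ℕ+ → ℕ∞) (phi : ℕ+ → ℕ+) (mu mu' : ℕ+ →₀ ℕ) : Prop :=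
  ∃ i j : ℕ+, phi i = j ∧ a i ≠ ⊤ ∧ b j ≠ ⊤ ∧ b j ≤ (mu j : ℕ∞) ∧
    ∀ l, mu' l = mu l + (if l = i then (a i).toNat else 0)
                      - (if l = j then (b j).toNat else 0)

/-- The graph `G_φ` is a path: there are an interval `I ⊆ ℤ` and an
injective map `k ↦ i_k` from `I` onto `supp(a) ∪ supp(b)` with
`φ(i_{k+1}) = i_k` whenever `k, k+1 ∈ I`, and every element of `supp(a)`
is of the form `i_k` with `k - 1 ∈ I`. -/
def IsPathGraph (a b : ℕ+ → ℕ∞) (phi : ℕ+ → ℕ+) : Prop :=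
  ∃ (I : Set ℤ) (f : ℤ → ℕ+),
    I.OrdConnected ∧
    Set.InjOn f I ∧
    f '' I = {i | a i ≠ ⊤} ∪ {j | b j ≠ ⊤} ∧
    (∀ k, k ∈ I → k + 1 ∈ I → phi (f (k + 1)) = f k) ∧
    (∀ i : ℕ+, a i ≠ ⊤ → ∃ k ∈ I, f k = i ∧ k - 1 ∈ I)

/-!
Give each part `j` the weight `w j = Σ 1/(j'·b_{j'})`, summed over the vertices `j'` at or after
`j` on the path, and give a partition `μ` the potential `Φ μ = Σ_j w j · j · m_j(μ)`. A step
replaces `b_j` parts `j = φ i` by `a_i` parts `i`, the successor of `j` on the path; since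
`i·a_i = j·b_j` and `w j = 1/(j·b_j) + w i`, it lowers `Φ` by exactly `1`. As `Φ ≥ 0` and
`w ≤ D`, a rewrite sequence from `λ` has length at most `Φ λ ≤ D·|λ|`.
-/

open scoped ENNReal

section PathTail

variable {α : Type*} (I : Set ℤ) (f : ℤ → α)

def pathTail (x : α) : Set α := {y | ∃ k ∈ I, ∃ l ∈ I, f k = x ∧ f l = y ∧ k ≤ l}

noncomputable def tailWeight (c : α → ℝ≥0∞) (x : α) : ℝ≥0∞ := ∑' y : pathTail I f x, c y

variable {I f}

lemma mem_pathTail_iff (hinj : Set.InjOn f I) {k : ℤ} (hk : k ∈ I) {y : α} :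
    y ∈ pathTail I f (f k) ↔ ∃ l ∈ I, f l = y ∧ k ≤ l := by
  constructor
  · rintro ⟨k', hk', l, hl, hfk', rfl, hle⟩
    exact ⟨l, hl, rfl, hinj hk' hk hfk' ▸ hle⟩
  · rintro ⟨l, hl, rfl, hle⟩
    exact ⟨k, hk, l, hl, rfl, rfl, hle⟩

lemma pathTail_eq_insert (hinj : Set.InjOn f I) {k : ℤ} (hk : k ∈ I) (hk1 : k + 1 ∈ I) :
    pathTail I f (f k) = insert (f k) (pathTail I f (f (k + 1))) := by
  ext y
  simp only [Set.mem_insert_iff, mem_pathTail_iff hinj hk, mem_pathTail_iff hinj hk1]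
  constructor
  · rintro ⟨l, hl, rfl, hle⟩
    rcases hle.eq_or_lt with rfl | hlt
    · exact Or.inl rfl
    · exact Or.inr ⟨l, hl, rfl, hlt⟩
  · rintro (rfl | ⟨l, hl, rfl, hle⟩)
    · exact ⟨k, hk, rfl, le_rfl⟩
    · exact ⟨l, hl, rfl, by omega⟩

lemma notMem_pathTail_succ (hinj : Set.InjOn f I) {k : ℤ} (hk : k ∈ I) (hk1 : k + 1 ∈ I) :
    f k ∉ pathTail I f (f (k + 1)) := by
  rw [mem_pathTail_iff hinj hk1]
  rintro ⟨l, hl, hfl, hle⟩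
  have := hinj hl hk hfl
  omega

lemma tailWeight_le_tsum (c : α → ℝ≥0∞) (x : α) : tailWeight I f c x ≤ ∑' y, c y :=
  ENNReal.tsum_comp_le_tsum_of_injective Subtype.val_injective c

lemma tailWeight_eq_add (c : α → ℝ≥0∞) (hinj : Set.InjOn f I) {k : ℤ} (hk : k ∈ I)
    (hk1 : k + 1 ∈ I) : tailWeight I f c (f k) = c (f k) + tailWeight I f c (f (k + 1)) := by
  rw [tailWeight, pathTail_eq_insert hinj hk hk1, Set.insert_eq,
    ENNReal.summable.tsum_union_disjoint
      (Set.disjoint_singleton_left.mpr (notMem_pathTail_succ hinj hk hk1)) ENNReal.summable,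
    tsum_singleton, tailWeight]

end PathTail

noncomputable def potential (w : ℕ+ → ℝ≥0∞) (μ : ℕ+ →₀ ℕ) : ℝ≥0∞ :=
  μ.sum fun j m => w j * ((j * m : ℕ) : ℝ≥0∞)

section Potential

variable (w : ℕ+ → ℝ≥0∞)

lemma potential_add (μ ν : ℕ+ →₀ ℕ) : potential w (μ + ν) = potential w μ + potential w ν :=
  Finsupp.sum_add_index' (fun _ => by simp) fun _ _ _ => by push_cast; ring

lemma potential_single (j : ℕ+) (m : ℕ) :
    potential w (Finsupp.single j m) = w j * ((j * m : ℕ) : ℝ≥0∞) :=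
  Finsupp.sum_single_index (by simp)

lemma potential_le_mul_psize {C : ℝ≥0∞} (hw : ∀ j, w j ≤ C) (μ : ℕ+ →₀ ℕ) :
    potential w μ ≤ C * psize μ := by
  rw [psize, Nat.cast_finsupp_sum, Finsupp.mul_sum]
  exact Finset.sum_le_sum fun j _ => mul_le_mul_left (hw j) _

end Potential

lemma natCast_le_of_forall_eq_add_one {β : Type*} {Φ : β → ℝ≥0∞} {s : ℕ → β} {k : ℕ}
    (hs : ∀ l < k, Φ (s l) = Φ (s (l + 1)) + 1) : (k : ℝ≥0∞) ≤ Φ (s 0) := by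
  suffices ∀ l ≤ k, Φ (s l) + l = Φ (s 0) from le_add_self.trans_eq (this k le_rfl)
  intro l hl
  induction l with
  | zero => simp
  | succ l ih => rw [← ih (by omega), hs l (by omega), Nat.cast_succ, add_assoc, add_comm 1]

section OHara

variable {a b : ℕ+ → ℕ∞} {phi : ℕ+ → ℕ+}

lemma OStep.add_single_eq {μ μ' : ℕ+ →₀ ℕ} (hstep : OStep a b phi μ μ') :
    ∃ i, a i ≠ ⊤ ∧ b (phi i) ≠ ⊤ ∧
      μ' + Finsupp.single (phi i) (b (phi i)).toNat = μ + Finsupp.single i (a i).toNat := by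
  obtain ⟨i, _, rfl, ha, hb, hle, hμ'⟩ := hstep
  have hB : (b (phi i)).toNat ≤ μ (phi i) := by
    simpa using ENat.toNat_le_toNat hle (ENat.natCast_ne_top _)
  refine ⟨i, ha, hb, Finsupp.ext fun l => ?_⟩
  simp only [Finsupp.add_apply, Finsupp.single_eq_pi_single, Pi.single_apply, hμ' l]
  rcases eq_or_ne l (phi i) with rfl | _ <;> split_ifs <;> omega

lemma PhiEquiv.mul_toNat_eq (h : PhiEquiv a b phi) {i : ℕ+} (ha : a i ≠ ⊤) :
    (i * (a i).toNat : ℕ) = phi i * (b (phi i)).toNat := by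
  have hb : b (phi i) ≠ ⊤ := h.2.2.1.mapsTo ha
  have := h.2.2.2 i ha
  rw [← ENat.natCast_toNat ha, ← ENat.natCast_toNat hb] at this
  exact_mod_cast this

lemma exists_path_edge_of_ne_top {I : Set ℤ} {f : ℤ → ℕ+}
    (hedge : ∀ k, k ∈ I → k + 1 ∈ I → phi (f (k + 1)) = f k)
    (hlast : ∀ i : ℕ+, a i ≠ ⊤ → ∃ k ∈ I, f k = i ∧ k - 1 ∈ I) {i : ℕ+} (ha : a i ≠ ⊤) :
    ∃ k ∈ I, k + 1 ∈ I ∧ f k = phi i ∧ f (k + 1) = i := by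
  obtain ⟨k, hk, rfl, hk'⟩ := hlast i ha
  have hk1 : k - 1 + 1 ∈ I := by simpa using hk
  refine ⟨k - 1, hk', hk1, ?_, by simp⟩
  simpa using (hedge _ hk' hk1).symm

noncomputable def invWeight (b : ℕ+ → ℕ∞) (j : ℕ+) : ℝ :=
  if b j = ⊤ then 0 else ((j : ℝ) * ((b j).toNat : ℝ))⁻¹

lemma invWeight_nonneg (b : ℕ+ → ℕ∞) (j : ℕ+) : 0 ≤ invWeight b j := by
  unfold invWeight
  split_ifs <;> positivity

lemma ofReal_invWeight_mul {j : ℕ+} (hb0 : b j ≠ 0) (hb : b j ≠ ⊤) :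
    ENNReal.ofReal (invWeight b j) * ((j * (b j).toNat : ℕ) : ℝ≥0∞) = 1 := by
  have hpos : (0 : ℝ) < (j : ℝ) * (b j).toNat := by
    have : 0 < (b j).toNat := ENat.toNat_pos hb0 hb
    positivity
  rw [invWeight, if_neg hb, ← ENNReal.ofReal_natCast, ← ENNReal.ofReal_mul (by positivity)]
  push_cast
  rw [inv_mul_cancel₀ hpos.ne', ENNReal.ofReal_one]

lemma potential_eq_add_one_of_oStep (h : PhiEquiv a b phi) {I : Set ℤ} {f : ℤ → ℕ+}
    (hinj : Set.InjOn f I) (hedge : ∀ k, k ∈ I → k + 1 ∈ I → phi (f (k + 1)) = f k)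
    (hlast : ∀ i : ℕ+, a i ≠ ⊤ → ∃ k ∈ I, f k = i ∧ k - 1 ∈ I)
    (hD : ∑' j, ENNReal.ofReal (invWeight b j) ≠ ⊤) {μ μ' : ℕ+ →₀ ℕ}
    (hstep : OStep a b phi μ μ') :
    potential (tailWeight I f (ENNReal.ofReal ∘ invWeight b)) μ =
      potential (tailWeight I f (ENNReal.ofReal ∘ invWeight b)) μ' + 1 := by
  set w := tailWeight I f (ENNReal.ofReal ∘ invWeight b)
  obtain ⟨i, ha, hb, hμ⟩ := hstep.add_single_eq
  obtain ⟨k, hk, hk1, hfk, hfk1⟩ := exists_path_edge_of_ne_top hedge hlast ha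
  have hw : w (phi i) = ENNReal.ofReal (invWeight b (phi i)) + w i := by
    rw [← hfk, ← hfk1]
    exact tailWeight_eq_add _ hinj hk hk1
  have hfin : w i * ((i * (a i).toNat : ℕ) : ℝ≥0∞) ≠ ⊤ :=
    ENNReal.mul_ne_top (ne_top_of_le_ne_top hD (tailWeight_le_tsum _ i)) (ENNReal.natCast_ne_top _)
  have := congrArg (potential w) hμ
  rw [potential_add, potential_add, potential_single, potential_single, hw, add_mul,
    ofReal_invWeight_mul (h.2.1 _) hb, ← h.mul_toNat_eq ha, ← add_assoc] at this
  exact ((ENNReal.add_left_inj hfin).mp this).symm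

end OHara

theorem ohara_path_bound_summable_general (a b : ℕ+ → ℕ∞) (phi : ℕ+ → ℕ+)
    (h : PhiEquiv a b phi) (hpath : IsPathGraph a b phi)
    (hD : Summable fun j : ℕ+ =>
      if b j = ⊤ then (0 : ℝ) else ((j : ℝ) * ((b j).toNat : ℝ))⁻¹)
    (n : ℕ) (lam : ℕ+ →₀ ℕ) (hsize : psize lam = n)
    (seq : ℕ → (ℕ+ →₀ ℕ)) (k : ℕ) (hseq0 : seq 0 = lam)
    (hseq : ∀ l < k, OStep a b phi (seq l) (seq (l + 1))) :
    (k : ℝ) ≤ (∑' j : ℕ+,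
      if b j = ⊤ then (0 : ℝ) else ((j : ℝ) * ((b j).toNat : ℝ))⁻¹) * n := by
  change (k : ℝ) ≤ (∑' j, invWeight b j) * n
  obtain ⟨I, f, -, hinj, -, hedge, hlast⟩ := hpath
  have hD' : ∑' j, ENNReal.ofReal (invWeight b j) = ENNReal.ofReal (∑' j, invWeight b j) :=
    (ENNReal.ofReal_tsum_of_nonneg (invWeight_nonneg b) hD).symm
  have hD0 : 0 ≤ ∑' j, invWeight b j := tsum_nonneg (invWeight_nonneg b)
  have hbound : ENNReal.ofReal k ≤ ENNReal.ofReal ((∑' j, invWeight b j) * n) := calc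
    ENNReal.ofReal k
      ≤ potential (tailWeight I f (ENNReal.ofReal ∘ invWeight b)) (seq 0) := by
        rw [ENNReal.ofReal_natCast]
        exact natCast_le_of_forall_eq_add_one fun l hl =>
          potential_eq_add_one_of_oStep h hinj hedge hlast (hD' ▸ ENNReal.ofReal_ne_top)
            (hseq l hl)
    _ ≤ (∑' j, ENNReal.ofReal (invWeight b j)) * psize lam :=
        hseq0 ▸ potential_le_mul_psize _ (tailWeight_le_tsum _) _
    _ = ENNReal.ofReal ((∑' j, invWeight b j) * n) := by
        rw [hD', hsize, ENNReal.ofReal_mul hD0, ENNReal.ofReal_natCast]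
  exact (ENNReal.ofReal_le_ofReal_iff (by positivity)).mp hbound

/-- if `G_φ` is a path and `D = Σ_{j ∈ supp(b)} 1/(j·b_j)`
converges, then for every `n` and every `λ ∈ 𝒜_n`, every rewrite sequence
from `λ` has length at most `D·n`. -/
theorem ohara_path_bound_summable (a b : ℕ+ → ℕ∞) (phi : ℕ+ → ℕ+)
    (h : PhiEquiv a b phi) (hpath : IsPathGraph a b phi)
    (hD : Summable fun j : ℕ+ =>
      if b j = ⊤ then (0 : ℝ) else ((j : ℝ) * ((b j).toNat : ℝ))⁻¹)
    (n : ℕ) (lam : ℕ+ →₀ ℕ) (hlam : InA a lam) (hsize : psize lam = n)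
    (seq : ℕ → (ℕ+ →₀ ℕ)) (k : ℕ) (hseq0 : seq 0 = lam)
    (hseq : ∀ l < k, OStep a b phi (seq l) (seq (l + 1))) :
    (k : ℝ) ≤ (∑' j : ℕ+,
      if b j = ⊤ then (0 : ℝ) else ((j : ℝ) * ((b j).toNat : ℝ))⁻¹) * n :=
  ohara_path_bound_summable_general a b phi h hpath hD n lam hsize seq k hseq0 hseq
end

section
/- Assume a ∼_φ b and that only finitely many i ∈ supp(a) are φ-periodic with minimal period greater than 2 (i.e., the graph G_φ has only finitely many cycles of length > 2). Then there exists a constant C > 0 such that for every n ≥ 2 and every λ ∈ 𝒜_n, every rewrite sequence from λ has length at most C·n·log n (log the natural logarithm). -/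
open scoped BigOperators

/-- `i ∈ supp(a)` is `φ`-periodic with minimal period `r`: the iterates
`φ(i), …, φ^{r-1}(i)` all lie in `supp(a)`, `φ^r(i) = i`, and no smaller
positive power of `φ` returns `i` to itself.  (A cycle of `G_φ` of length
`r` is a `φ`-orbit of size `r`.) -/
def PhiPeriodic (a : ℕ+ → ℕ∞) (phi : ℕ+ → ℕ+) (i : ℕ+) (r : ℕ) : Prop :=
  0 < r ∧ a i ≠ ⊤ ∧
  (∀ s, 0 < s → s < r → a (phi^[s] i) ≠ ⊤) ∧
  phi^[r] i = i ∧
  (∀ s, 0 < s → s < r → phi^[s] i ≠ i)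

/-!
A step fires an edge `i ∈ supp(a)`, moving the weight `N_i = i·a_i = φ(i)·b_{φ(i)}` from the
parts `φ(i)` to the parts `i`. We bound how often each edge fires, using that the weight at a node
changes only through its two incident edges.

* If `i` does not return to itself inside `supp(a)`, the nodes reachable from `φ(i)` form a set
  whose weight never grows and drops by `N_i` whenever `i` fires, so `i` fires at most `n / i`
  times: `n·(1 + log n)` in total.
* A fixed point never fires.
* On a `φ`-cycle of length `r ≥ 2`, the weight shipped through each edge stays at most the product
  `K` of the `N`'s along the cycle: the shipped amounts are multiples of their `N`, and once one of
  them reaches `K` the node balances force all of them to `K` and every node back to its initial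
  multiplicity, which the node fed by the latest firing contradicts. For `r > 2` this is a
  constant for each of finitely many edges. For `r = 2`, either the partner edge never fires and
  `i` is limited by the initial weight of `φ(i)`, or it has fired, and then `K / N_i = N_{φ(i)}`
  is at most the conserved weight of the pair; `2n` in total.
-/

open Function Classical

def edgeWeight (a : ℕ+ → ℕ∞) (i : ℕ+) : ℕ := i * (a i).toNat

noncomputable def massOn (A : Set ℕ+) (mu : ℕ+ →₀ ℕ) : ℕ :=
  mu.sum fun v m => if v ∈ A then (v : ℕ) * m else 0

theorem massOn_add (A : Set ℕ+) (mu nu : ℕ+ →₀ ℕ) :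
    massOn A (mu + nu) = massOn A mu + massOn A nu :=
  Finsupp.sum_add_index' (fun _ => by simp) fun _ _ _ => by split_ifs <;> ring

theorem massOn_single (A : Set ℕ+) (v : ℕ+) (c : ℕ) :
    massOn A (Finsupp.single v c) = if v ∈ A then (v : ℕ) * c else 0 :=
  Finsupp.sum_single_index (by simp)

theorem massOn_singleton (v : ℕ+) (mu : ℕ+ →₀ ℕ) : massOn {v} mu = v * mu v := by
  simp [massOn, Finsupp.sum]

theorem massOn_le_psize (A : Set ℕ+) (mu : ℕ+ →₀ ℕ) : massOn A mu ≤ psize mu :=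
  Finset.sum_le_sum fun _ _ => by dsimp only; split_ifs <;> simp

theorem sum_mul_apply_le_psize (S : Finset ℕ+) (mu : ℕ+ →₀ ℕ) :
    ∑ v ∈ S, (v : ℕ) * mu v ≤ psize mu :=
  Finset.sum_le_sum_of_ne_zero fun _ _ hv =>
    Finsupp.mem_support_iff.mpr (right_ne_zero_of_mul hv)

section PhiEquiv

variable {a b : ℕ+ → ℕ∞} {phi : ℕ+ → ℕ+} {i : ℕ+}

theorem PhiEquiv.edgeWeight_eq (h : PhiEquiv a b phi) (hi : a i ≠ ⊤) :
    edgeWeight a i = phi i * (b (phi i)).toNat := by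
  have hb : b (phi i) ≠ ⊤ := h.2.2.1.mapsTo hi
  have := h.2.2.2 i hi
  rw [← ENat.natCast_toNat hi, ← ENat.natCast_toNat hb] at this
  exact_mod_cast this

theorem PhiEquiv.injOn (h : PhiEquiv a b phi) : Set.InjOn phi {i | a i ≠ ⊤} :=
  h.2.2.1.injOn

theorem PhiEquiv.le_edgeWeight (h : PhiEquiv a b phi) (hi : a i ≠ ⊤) : (i : ℕ) ≤ edgeWeight a i :=
  Nat.le_mul_of_pos_right _ (ENat.toNat_pos (h.1 i) hi)

theorem PhiEquiv.edgeWeight_pos (h : PhiEquiv a b phi) (hi : a i ≠ ⊤) : 0 < edgeWeight a i :=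
  i.pos.trans_le (h.le_edgeWeight hi)

theorem InA.mul_apply_lt_edgeWeight {mu : ℕ+ →₀ ℕ} (hmu : InA a mu) (hi : a i ≠ ⊤) :
    i * mu i < edgeWeight a i := by
  have := hmu i
  rw [← ENat.natCast_toNat hi] at this
  exact Nat.mul_lt_mul_of_pos_left (by exact_mod_cast this) i.pos

end PhiEquiv

/-- `OStep` with the fired edge `i` made explicit and the truncated subtraction cleared. -/
def FiresAt (a b : ℕ+ → ℕ∞) (phi : ℕ+ → ℕ+) (mu mu' : ℕ+ →₀ ℕ) (i : ℕ+) : Prop :=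
  a i ≠ ⊤ ∧ (b (phi i)).toNat ≤ mu (phi i) ∧
    mu' + Finsupp.single (phi i) (b (phi i)).toNat = mu + Finsupp.single i (a i).toNat

section FiresAt

variable {a b : ℕ+ → ℕ∞} {phi : ℕ+ → ℕ+} {mu mu' : ℕ+ →₀ ℕ} {i u : ℕ+}

theorem OStep.exists_firesAt (hs : OStep a b phi mu mu') : ∃ i, FiresAt a b phi mu mu' i := by
  obtain ⟨i, _, rfl, hai, hbj, hle, hmu'⟩ := hs
  rw [← ENat.natCast_toNat hbj, Nat.cast_le] at hle
  refine ⟨i, hai, hle, Finsupp.ext fun v => ?_⟩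
  simp only [Finsupp.add_apply, Finsupp.single_apply, hmu' v]
  rcases eq_or_ne v (phi i) with rfl | hv
  · simp only [if_true, @eq_comm _ (phi i) i]
    split_ifs <;> omega
  · simp only [hv, hv.symm, if_false, @eq_comm _ i v]
    split_ifs <;> omega

theorem FiresAt.toNat_le_apply (hf : FiresAt a b phi mu mu' i) (hi : phi i ≠ i) :
    (a i).toNat ≤ mu' i := by
  have := DFunLike.congr_fun hf.2.2 i
  simp only [Finsupp.coe_add, Pi.add_apply, Finsupp.single_eq_of_ne' hi, add_zero,
    Finsupp.single_eq_same] at this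
  omega

theorem FiresAt.edgeWeight_le (h : PhiEquiv a b phi) (hf : FiresAt a b phi mu mu' i) :
    edgeWeight a i ≤ phi i * mu (phi i) := by
  rw [h.edgeWeight_eq hf.1]
  exact Nat.mul_le_mul_left _ hf.2.1

theorem FiresAt.massOn_balance (h : PhiEquiv a b phi) (hf : FiresAt a b phi mu mu' i) (A : Set ℕ+) :
    massOn A mu' + (if phi i ∈ A then edgeWeight a i else 0)
      = massOn A mu + (if i ∈ A then edgeWeight a i else 0) := by
  have := congrArg (massOn A) hf.2.2
  rwa [massOn_add, massOn_add, massOn_single, massOn_single, ← h.edgeWeight_eq hf.1] at this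

theorem FiresAt.node_balance (h : PhiEquiv a b phi) (hf : FiresAt a b phi mu mu' i)
    (hu : a u ≠ ⊤) :
    phi u * mu' (phi u) + (if i = u then edgeWeight a u else 0)
      = phi u * mu (phi u) + (if i = phi u then edgeWeight a (phi u) else 0) := by
  have := hf.massOn_balance h {phi u}
  simp only [massOn_singleton, Set.mem_singleton_iff, h.injOn.eq_iff hf.1 hu] at this
  convert this using 2 <;> split_ifs with h' <;> simp [h']

end FiresAt

def forwardChain (a : ℕ+ → ℕ∞) (phi : ℕ+ → ℕ+) (i : ℕ+) : Set ℕ+ :=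
  {v | ∃ s, 0 < s ∧ (∀ m < s, a (phi^[m] i) ≠ ⊤) ∧ phi^[s] i = v}

def IsRecurrent (a : ℕ+ → ℕ∞) (phi : ℕ+ → ℕ+) (i : ℕ+) : Prop := i ∈ forwardChain a phi i

section Recurrence

variable {a : ℕ+ → ℕ∞} {phi : ℕ+ → ℕ+} {i x : ℕ+}

theorem apply_mem_forwardChain (hi : a i ≠ ⊤) : phi i ∈ forwardChain a phi i :=
  ⟨1, one_pos, fun m hm => by rwa [Nat.lt_one_iff.mp hm], rfl⟩

theorem apply_mem_forwardChain_of_mem (hx : a x ≠ ⊤) (hmem : x ∈ forwardChain a phi i) :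
    phi x ∈ forwardChain a phi i := by
  obtain ⟨s, hs, hchain, rfl⟩ := hmem
  refine ⟨s + 1, s.succ_pos, fun m hm => ?_, iterate_succ_apply' phi s i⟩
  rcases Nat.lt_succ_iff_lt_or_eq.mp hm with hm | rfl
  exacts [hchain m hm, hx]

theorem IsRecurrent.iterate_ne_top (hrec : IsRecurrent a phi i) (s : ℕ) :
    a (phi^[s] i) ≠ ⊤ := by
  obtain ⟨r, hr, hchain, hper⟩ := hrec
  rw [← IsPeriodicPt.iterate_mod_apply hper]
  exact hchain _ (Nat.mod_lt _ hr)

theorem IsRecurrent.minimalPeriod_pos (hrec : IsRecurrent a phi i) : 0 < minimalPeriod phi i := by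
  obtain ⟨r, hr, -, hper⟩ := hrec
  exact IsPeriodicPt.minimalPeriod_pos hr hper

theorem IsRecurrent.phiPeriodic (hrec : IsRecurrent a phi i) :
    PhiPeriodic a phi i (minimalPeriod phi i) :=
  ⟨hrec.minimalPeriod_pos, hrec.iterate_ne_top 0, fun s _ _ => hrec.iterate_ne_top s,
    iterate_minimalPeriod, fun _ hs hsp => not_isPeriodicPt_of_pos_of_lt_minimalPeriod hs.ne' hsp⟩

end Recurrence

def IsRun (a b : ℕ+ → ℕ∞) (phi : ℕ+ → ℕ+) (seq : ℕ → ℕ+ →₀ ℕ) (e : ℕ → ℕ+) (k : ℕ) : Prop :=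
  ∀ l < k, FiresAt a b phi (seq l) (seq (l + 1)) (e l)

theorem exists_isRun {a b : ℕ+ → ℕ∞} {phi : ℕ+ → ℕ+} {seq : ℕ → ℕ+ →₀ ℕ} {k : ℕ}
    (hsteps : ∀ l < k, OStep a b phi (seq l) (seq (l + 1))) : ∃ e, IsRun a b phi seq e k := by
  choose! e he using fun l (hl : l < k) => (hsteps l hl).exists_firesAt
  exact ⟨e, he⟩

/-- The weight shipped from `phi i` to `i` during the first `l` steps. -/
def flow (a : ℕ+ → ℕ∞) (e : ℕ → ℕ+) (i : ℕ+) (l : ℕ) : ℕ :=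
  edgeWeight a i * Nat.count (e · = i) l

theorem Nat.add_le_of_dvd_of_lt {d x y : ℕ} (hx : d ∣ x) (hy : d ∣ y) (hxy : x < y) :
    x + d ≤ y := by
  have := Nat.le_of_dvd (Nat.sub_pos_of_lt hxy) (Nat.dvd_sub hy hx)
  omega

noncomputable def cycleWeight (a : ℕ+ → ℕ∞) (phi : ℕ+ → ℕ+) (i : ℕ+) : ℕ :=
  ∏ s ∈ Finset.range (minimalPeriod phi i), edgeWeight a (phi^[s] i)

section Run

variable {a b : ℕ+ → ℕ∞} {phi : ℕ+ → ℕ+} {seq : ℕ → ℕ+ →₀ ℕ} {e : ℕ → ℕ+} {k : ℕ}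
  {i u : ℕ+}

@[simp]
theorem flow_zero : flow a e i 0 = 0 := by
  simp [flow]

theorem flow_succ (l : ℕ) :
    flow a e i (l + 1) = flow a e i l + if e l = i then edgeWeight a i else 0 := by
  simp only [flow, Nat.count_succ]
  split_ifs <;> ring

theorem edgeWeight_dvd_flow (l : ℕ) : edgeWeight a i ∣ flow a e i l :=
  dvd_mul_right _ _

theorem count_le_flow (h : PhiEquiv a b phi) (hi : a i ≠ ⊤) (l : ℕ) :
    Nat.count (e · = i) l ≤ flow a e i l :=
  Nat.le_mul_of_pos_left _ (h.edgeWeight_pos hi)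

theorem massOn_add_flow_le (h : PhiEquiv a b phi) (hrun : IsRun a b phi seq e k) {A : Set ℕ+}
    (hA : ∀ x, a x ≠ ⊤ → x ∈ A → phi x ∈ A) (hi : i ∉ A) (hphi : phi i ∈ A) :
    ∀ l ≤ k, massOn A (seq l) + flow a e i l ≤ massOn A (seq 0) := by
  intro l
  induction l with
  | zero => simp
  | succ m ih =>
    intro hm
    have hf := hrun m (by omega)
    have hstep := hf.massOn_balance h A
    have := ih (by omega)
    rw [flow_succ]
    by_cases hx : e m = i
    · simp only [hx, hi, hphi, if_true, if_false] at hstep ⊢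
      omega
    · by_cases hxA : e m ∈ A
      · simp only [hxA, hA _ hf.1 hxA, hx, if_true, if_false] at hstep ⊢
        omega
      · simp only [hxA, hx, if_false] at hstep ⊢
        omega

theorem node_balance (h : PhiEquiv a b phi) (hrun : IsRun a b phi seq e k) (hu : a u ≠ ⊤) :
    ∀ l ≤ k, phi u * seq l (phi u) + flow a e u l
      = phi u * seq 0 (phi u) + flow a e (phi u) l := by
  intro l
  induction l with
  | zero => simp
  | succ m ih =>
    intro hm
    have := (hrun m (by omega)).node_balance h hu
    have := ih (by omega)
    rw [flow_succ, flow_succ]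
    omega

theorem count_eq_zero_of_isFixedPt (h : PhiEquiv a b phi) (hrun : IsRun a b phi seq e k)
    (hInA : InA a (seq 0)) (hu : a u ≠ ⊤) (hfix : phi u = u) : Nat.count (e · = u) k = 0 := by
  refine Nat.count_iff_forall_not.mpr fun l hl hel => ?_
  have hbal := node_balance h hrun hu l hl.le
  have hfired := (hrun l hl).edgeWeight_le h
  have hlt := hInA.mul_apply_lt_edgeWeight hu
  rw [hel, hfix] at hfired
  rw [hfix] at hbal
  omega

theorem flow_le_psize_of_not_isRecurrent (h : PhiEquiv a b phi) (hrun : IsRun a b phi seq e k)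
    (hi : a i ≠ ⊤) (hrec : ¬IsRecurrent a phi i) : flow a e i k ≤ psize (seq 0) := by
  have := massOn_add_flow_le h hrun (fun _ hx hmem => apply_mem_forwardChain_of_mem hx hmem)
    hrec (apply_mem_forwardChain hi) k le_rfl
  have := massOn_le_psize (forwardChain a phi i) (seq 0)
  omega

theorem edgeWeight_dvd_cycleWeight (hp : 0 < minimalPeriod phi i) (s : ℕ) :
    edgeWeight a (phi^[s] i) ∣ cycleWeight a phi i := by
  rw [← iterate_mod_minimalPeriod_eq]
  exact Finset.dvd_prod_of_mem _ (Finset.mem_range.mpr (Nat.mod_lt _ hp))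

theorem cycleWeight_pos (h : PhiEquiv a b phi) (hsupp : ∀ s, a (phi^[s] i) ≠ ⊤) :
    0 < cycleWeight a phi i :=
  Finset.prod_pos fun s _ => h.edgeWeight_pos (hsupp s)

theorem flow_iterate_succ_eq_of_eq (h : PhiEquiv a b phi) (hrun : IsRun a b phi seq e k)
    (hInA : InA a (seq 0)) (hp : 0 < minimalPeriod phi i) (hsupp : ∀ s, a (phi^[s] i) ≠ ⊤)
    {l s : ℕ} (hl : l ≤ k) (hle : flow a e (phi^[s + 1] i) l ≤ cycleWeight a phi i)
    (heq : flow a e (phi^[s] i) l = cycleWeight a phi i) :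
    flow a e (phi^[s + 1] i) l = cycleWeight a phi i := by
  have hbal := node_balance h hrun (hsupp s) l hl
  rw [show phi (phi^[s] i) = phi^[s + 1] i from (iterate_succ_apply' phi s i).symm] at hbal
  have hlt := hInA.mul_apply_lt_edgeWeight (hsupp (s + 1))
  by_contra hne
  have := Nat.add_le_of_dvd_of_lt (edgeWeight_dvd_flow l) (edgeWeight_dvd_cycleWeight hp (s + 1))
    (lt_of_le_of_ne hle hne)
  omega

theorem flow_iterate_eq_of_eq (h : PhiEquiv a b phi) (hrun : IsRun a b phi seq e k)
    (hInA : InA a (seq 0)) (hp : 0 < minimalPeriod phi i) (hsupp : ∀ s, a (phi^[s] i) ≠ ⊤)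
    {l s : ℕ} (hl : l ≤ k) (hle : ∀ t, flow a e (phi^[t] i) l ≤ cycleWeight a phi i)
    (heq : flow a e (phi^[s] i) l = cycleWeight a phi i) (t : ℕ) :
    flow a e (phi^[t] i) l = cycleWeight a phi i := by
  have hall : ∀ d, flow a e (phi^[s + d] i) l = cycleWeight a phi i := fun d => by
    induction d with
    | zero => exact heq
    | succ d ih => exact flow_iterate_succ_eq_of_eq h hrun hInA hp hsupp hl (hle _) ih
  have hps : s ≤ minimalPeriod phi i * s := Nat.le_mul_of_pos_left s hp
  have hiter : phi^[t] i = phi^[s + (t + minimalPeriod phi i * s - s)] i := by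
    rw [show s + (t + minimalPeriod phi i * s - s) = t + minimalPeriod phi i * s by omega,
      iterate_add_apply, ((isPeriodicPt_minimalPeriod phi i).mul_const s).eq]
  rw [hiter]
  exact hall _

theorem flow_iterate_lt_of_eq_iterate_succ (h : PhiEquiv a b phi) (hrun : IsRun a b phi seq e k)
    (hInA : InA a (seq 0)) (hp : 1 < minimalPeriod phi i) (hsupp : ∀ s, a (phi^[s] i) ≠ ⊤)
    {m t : ℕ} (hm : m < k) (hfire : e m = phi^[t + 1] i)
    (hle : flow a e (phi^[t + 1] i) (m + 1) ≤ cycleWeight a phi i) :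
    flow a e (phi^[t] i) (m + 1) < cycleWeight a phi i := by
  have hbal := node_balance h hrun (hsupp t) (m + 1) hm
  rw [show phi (phi^[t] i) = phi^[t + 1] i from (iterate_succ_apply' phi t i).symm] at hbal
  have hper : i ∈ periodicPts phi := minimalPeriod_pos_iff_mem_periodicPts.mp (by omega)
  have hmoves : phi (phi^[t + 1] i) ≠ phi^[t + 1] i := fun hfix => by
    have := minimalPeriod_apply_iterate hper (t + 1)
    rw [minimalPeriod_eq_one_iff_isFixedPt.mpr hfix] at this
    omega
  have hgain := (hrun m hm).toNat_le_apply (hfire ▸ hmoves)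
  rw [hfire] at hgain
  have hgain' := Nat.mul_le_mul_left (phi^[t + 1] i : ℕ) hgain
  have hlt := hInA.mul_apply_lt_edgeWeight (hsupp (t + 1))
  unfold edgeWeight at hlt
  omega

theorem flow_iterate_le_cycleWeight_and_exists_lt (h : PhiEquiv a b phi)
    (hrun : IsRun a b phi seq e k) (hInA : InA a (seq 0)) (hp : 1 < minimalPeriod phi i)
    (hsupp : ∀ s, a (phi^[s] i) ≠ ⊤) :
    ∀ l ≤ k, (∀ t, flow a e (phi^[t] i) l ≤ cycleWeight a phi i) ∧
      ∃ t, flow a e (phi^[t] i) l < cycleWeight a phi i := by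
  intro l
  induction l with
  | zero => exact fun _ => ⟨fun t => by simp, 0, by simpa using cycleWeight_pos h hsupp⟩
  | succ m ih =>
    intro hm
    obtain ⟨hle, t₀, ht₀⟩ := ih (by omega)
    have hlt : ∀ t, flow a e (phi^[t] i) m < cycleWeight a phi i := fun t =>
      (hle t).lt_of_ne fun heq =>
        ht₀.ne (flow_iterate_eq_of_eq h hrun hInA (by omega) hsupp (by omega) hle heq t₀)
    have hle' : ∀ t, flow a e (phi^[t] i) (m + 1) ≤ cycleWeight a phi i := fun t => by
      rw [flow_succ]
      split_ifs
      · exact Nat.add_le_of_dvd_of_lt (edgeWeight_dvd_flow m)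
          (edgeWeight_dvd_cycleWeight (by omega) t) (hlt t)
      · exact (hlt t).le
    refine ⟨hle', ?_⟩
    by_cases hcyc : ∃ s, e m = phi^[s] i
    · obtain ⟨s, hs⟩ := hcyc
      have hs' : e m = phi^[s + minimalPeriod phi i - 1 + 1] i := by
        rwa [Nat.sub_add_cancel (by omega), iterate_add_minimalPeriod_eq]
      exact ⟨_, flow_iterate_lt_of_eq_iterate_succ h hrun hInA hp hsupp (by omega) hs' (hle' _)⟩
    · exact ⟨t₀, by rwa [flow_succ, if_neg (not_exists.mp hcyc t₀), add_zero]⟩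

theorem flow_le_cycleWeight (h : PhiEquiv a b phi) (hrun : IsRun a b phi seq e k)
    (hInA : InA a (seq 0)) (hp : 1 < minimalPeriod phi i) (hsupp : ∀ s, a (phi^[s] i) ≠ ⊤) :
    flow a e i k ≤ cycleWeight a phi i :=
  (flow_iterate_le_cycleWeight_and_exists_lt h hrun hInA hp hsupp k le_rfl).1 0

theorem count_le_of_minimalPeriod_eq_two (h : PhiEquiv a b phi) (hrun : IsRun a b phi seq e k)
    (hInA : InA a (seq 0)) (hrec : IsRecurrent a phi i) (h2 : minimalPeriod phi i = 2) :
    Nat.count (e · = i) k ≤ i * seq 0 i + phi i * seq 0 (phi i) := by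
  have hsupp := hrec.iterate_ne_top
  have hi : a i ≠ ⊤ := hsupp 0
  have hφi : a (phi i) ≠ ⊤ := hsupp 1
  have hper : phi (phi i) = i := by
    simpa [h2] using iterate_minimalPeriod (f := phi) (x := i)
  have hcount := count_le_flow h hi (e := e) k
  have hbal := node_balance h hrun hi k le_rfl
  by_cases hpartner : Nat.count (e · = phi i) k = 0
  · simp only [flow, hpartner, mul_zero] at hbal
    unfold flow at hcount
    omega
  obtain ⟨l, hl, hel⟩ : ∃ l < k, e l = phi i := by
    by_contra! hno
    exact hpartner (Nat.count_iff_forall_not.mpr hno)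
  have hcw : cycleWeight a phi i = edgeWeight a i * edgeWeight a (phi i) := by
    simp [cycleWeight, h2, Finset.prod_range_succ]
  have hcross := flow_le_cycleWeight h hrun hInA (by omega) hsupp
  rw [hcw, flow] at hcross
  have hcount' := Nat.le_of_mul_le_mul_left hcross (h.edgeWeight_pos hi)
  have hfired := (hrun l hl).edgeWeight_le h
  rw [hel, hper] at hfired
  have hbal₁ := node_balance h hrun hi l hl.le
  have hbal₂ := node_balance h hrun hφi l hl.le
  rw [hper] at hbal₂
  omega

theorem count_le (h : PhiEquiv a b phi) (hrun : IsRun a b phi seq e k) (hInA : InA a (seq 0))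
    (hi : a i ≠ ⊤) :
    Nat.count (e · = i) k ≤ psize (seq 0) / i + (i * seq 0 i + phi i * seq 0 (phi i)) +
      if ∃ r, 2 < r ∧ PhiPeriodic a phi i r then cycleWeight a phi i else 0 := by
  by_cases hrec : IsRecurrent a phi i
  · obtain hp | hp | hp : minimalPeriod phi i = 1 ∨ minimalPeriod phi i = 2 ∨
        2 < minimalPeriod phi i := by
      have := hrec.minimalPeriod_pos
      omega
    · rw [count_eq_zero_of_isFixedPt h hrun hInA hi (minimalPeriod_eq_one_iff_isFixedPt.mp hp)]
      exact Nat.zero_le _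
    · exact ((count_le_of_minimalPeriod_eq_two h hrun hInA hrec hp).trans
        (Nat.le_add_left _ _)).trans (Nat.le_add_right _ _)
    · rw [if_pos ⟨_, hp, hrec.phiPeriodic⟩]
      exact ((count_le_flow h hi k).trans
        (flow_le_cycleWeight h hrun hInA (by omega) hrec.iterate_ne_top)).trans
        (Nat.le_add_left _ _)
  · have hflow : Nat.count (e · = i) k * i ≤ psize (seq 0) :=
      (Nat.mul_le_mul_left _ (h.le_edgeWeight hi)).trans
        ((mul_comm _ _).trans_le (flow_le_psize_of_not_isRecurrent h hrun hi hrec))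
    exact ((Nat.le_div_iff_mul_le i.pos).mpr hflow).trans
      ((Nat.le_add_right _ _).trans (Nat.le_add_right _ _))

theorem run_length_le (h : PhiEquiv a b phi) (hrun : IsRun a b phi seq e k) (hInA : InA a (seq 0))
    {F : Finset ℕ+} (hF : ∀ i, (∃ r, 2 < r ∧ PhiPeriodic a phi i r) → i ∈ F) :
    k ≤ ∑ i ∈ (Finset.range k).image e, psize (seq 0) / i + 2 * psize (seq 0) +
      ∑ i ∈ F, cycleWeight a phi i := by
  set I := (Finset.range k).image e
  have hI : ∀ i ∈ I, a i ≠ ⊤ := fun i hi => by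
    obtain ⟨l, hl, rfl⟩ := Finset.mem_image.mp hi
    exact (hrun l (Finset.mem_range.mp hl)).1
  have hk : k = ∑ i ∈ I, Nat.count (e · = i) k := by
    simpa [Nat.count_eq_card_filter_range] using Finset.card_eq_sum_card_image e (Finset.range k)
  have hpair : ∑ i ∈ I, (i * seq 0 i + phi i * seq 0 (phi i)) ≤ 2 * psize (seq 0) := by
    have himage : ∑ v ∈ I.image phi, (v : ℕ) * seq 0 v = ∑ i ∈ I, phi i * seq 0 (phi i) :=
      Finset.sum_image (h.injOn.mono hI)
    rw [Finset.sum_add_distrib, ← himage]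
    have := sum_mul_apply_le_psize I (seq 0)
    have := sum_mul_apply_le_psize (I.image phi) (seq 0)
    omega
  have hcyc : ∑ i ∈ I, (if ∃ r, 2 < r ∧ PhiPeriodic a phi i r then cycleWeight a phi i else 0)
      ≤ ∑ i ∈ F, cycleWeight a phi i := by
    rw [← Finset.sum_filter]
    exact Finset.sum_le_sum_of_subset fun i hi => hF i (Finset.mem_filter.mp hi).2
  calc k = ∑ i ∈ I, Nat.count (e · = i) k := hk
    _ ≤ ∑ i ∈ I, (psize (seq 0) / i + (i * seq 0 i + phi i * seq 0 (phi i)) +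
          if ∃ r, 2 < r ∧ PhiPeriodic a phi i r then cycleWeight a phi i else 0) :=
        Finset.sum_le_sum fun i hi => count_le h hrun hInA (hI i hi)
    _ ≤ _ := by
        rw [Finset.sum_add_distrib, Finset.sum_add_distrib]
        omega

end Run

theorem sum_div_le_mul_one_add_log (S : Finset ℕ+) (n : ℕ) :
    ((∑ i ∈ S, n / (i : ℕ) : ℕ) : ℝ) ≤ n * (1 + Real.log n) := by
  have hsub : ∑ i ∈ S, n / (i : ℕ) ≤ ∑ j ∈ Finset.Icc 1 n, n / j := by
    have hmap : ∑ i ∈ S, n / (i : ℕ) = ∑ j ∈ S.map ⟨PNat.val, PNat.coe_injective⟩, n / j :=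
      (Finset.sum_map S ⟨PNat.val, PNat.coe_injective⟩ (n / ·)).symm
    rw [hmap]
    refine Finset.sum_le_sum_of_ne_zero fun j hj hne => ?_
    obtain ⟨i, -, rfl⟩ := Finset.mem_map.mp hj
    exact Finset.mem_Icc.mpr ⟨i.pos, Nat.le_of_not_lt fun hlt => hne (Nat.div_eq_of_lt hlt)⟩
  calc ((∑ i ∈ S, n / (i : ℕ) : ℕ) : ℝ) ≤ ∑ j ∈ Finset.Icc 1 n, ((n / j : ℕ) : ℝ) := by
        exact_mod_cast hsub
    _ ≤ ∑ j ∈ Finset.Icc 1 n, (n : ℝ) * (j : ℝ)⁻¹ :=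
        Finset.sum_le_sum fun j _ => by simpa [div_eq_mul_inv] using Nat.cast_div_le
    _ = n * harmonic n := by
        rw [← Finset.mul_sum, harmonic_eq_sum_Icc]
        push_cast
        rfl
    _ ≤ n * (1 + Real.log n) :=
        mul_le_mul_of_nonneg_left (harmonic_le_one_add_log n) (Nat.cast_nonneg n)

theorem mul_one_add_log_add_le {n : ℕ} (hn : 2 ≤ n) {D : ℝ} (hD : 0 ≤ D) :
    n * (1 + Real.log n) + 2 * n + D ≤ (7 + 2 * D) * n * Real.log n := by
  have hn' : (2 : ℝ) ≤ n := by exact_mod_cast hn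
  have hlog : 1 / 2 ≤ Real.log n := by
    have := Real.log_le_log (by norm_num) hn'
    linarith [Real.log_two_gt_d9]
  have hnlog : 1 ≤ n * Real.log n := by nlinarith
  nlinarith [mul_nonneg hD (sub_nonneg.mpr hnlog)]

/-- if `G_φ` has only finitely many cycles of length `> 2`
(i.e. only finitely many `i ∈ supp(a)` are `φ`-periodic with minimal period
`> 2`), then there is `C > 0` such that for every `n ≥ 2` and every
`λ ∈ 𝒜_n`, every rewrite sequence from `λ` has length at most `C·n·log n`. -/
theorem ohara_nlogn_bound (a b : ℕ+ → ℕ∞) (phi : ℕ+ → ℕ+)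
    (h : PhiEquiv a b phi)
    (hfin : {i : ℕ+ | ∃ r : ℕ, 2 < r ∧ PhiPeriodic a phi i r}.Finite) :
    ∃ C : ℝ, 0 < C ∧ ∀ n : ℕ, 2 ≤ n → ∀ lam : ℕ+ →₀ ℕ,
      InA a lam → psize lam = n →
      ∀ (seq : ℕ → (ℕ+ →₀ ℕ)) (k : ℕ), seq 0 = lam →
        (∀ l < k, OStep a b phi (seq l) (seq (l + 1))) →
        (k : ℝ) ≤ C * n * Real.log n := by
  set D := ∑ i ∈ hfin.toFinset, cycleWeight a phi i
  refine ⟨7 + 2 * D, by positivity, ?_⟩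
  rintro n hn lam hlam rfl seq k rfl hsteps
  obtain ⟨e, hrun⟩ := exists_isRun hsteps
  have hk := run_length_le h hrun hlam (F := hfin.toFinset) fun i hi => hfin.mem_toFinset.mpr hi
  have hharm := sum_div_le_mul_one_add_log ((Finset.range k).image e) (psize (seq 0))
  calc (k : ℝ) ≤ psize (seq 0) * (1 + Real.log (psize (seq 0))) + 2 * psize (seq 0) + D := by
        have : (k : ℝ) ≤ ((∑ i ∈ (Finset.range k).image e, psize (seq 0) / (i : ℕ) : ℕ) : ℝ) +
            2 * psize (seq 0) + D := by exact_mod_cast hk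
        linarith
    _ ≤ _ := mul_one_add_log_add_le hn (Nat.cast_nonneg D)
end

section
/- There exist sequences a, b and a bijection φ with a ∼_φ b such that the graph G_φ is a path, and a constant c > 0, such that for infinitely many n there exist a partition λ ∈ 𝒜_n and a rewrite sequence from λ of length at least c·n·log(log n). -/
open scoped BigOperators

/-!
Take the vertices `v = 3, 6, 5, 10, 7, 14, …` (`v (2t) = 2t + 3`, `v (2t + 1) = 4t + 6`) and let
`φ (v (k + 1)) = v k`, so that `G_φ` is the path `v 0 ← v 1 ← v 2 ← ⋯`; a step along the edge
`k` trades `β k` parts `v k` for `α k` parts `v (k + 1)`. For an `n` divisible by every exchange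
size `v k * β k`, the partition with `n / 3` parts `3` can be pushed along the whole path, spending
`n / (v k * β k)` steps on edge `k`. The even edges alone (two parts `2t + 3` for one part `4t + 6`)
cost `n / (4t + 6)` steps each, so `2m` edges take at least `(n / 6) · H_m ≥ (n / 6) log (m + 1)`
steps, while `n = ∏_{k < 2m} v k * β k ≤ (m + 1) ^ (10 m)` gives `log log n ≤ 10 log (m + 1)`.
-/

open Finset Function

inductive ReachesIn {α : Type*} (r : α → α → Prop) : ℕ → α → α → Prop
  | refl (x : α) : ReachesIn r 0 x x
  | head {k : ℕ} {x y z : α} : r x y → ReachesIn r k y z → ReachesIn r (k + 1) x z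

namespace ReachesIn

variable {α : Type*} {r : α → α → Prop}

theorem trans {k m : ℕ} {x y z : α} :
    ReachesIn r k x y → ReachesIn r m y z → ReachesIn r (k + m) x z
  | .refl _, h => by rwa [Nat.zero_add]
  | .head hxy h, h' => by rw [Nat.add_right_comm]; exact .head hxy (h.trans h')

theorem exists_seq {k : ℕ} {x y : α} :
    ReachesIn r k x y → ∃ seq : ℕ → α, seq 0 = x ∧ ∀ l < k, r (seq l) (seq (l + 1))
  | .refl x => ⟨fun _ => x, rfl, by simp⟩
  | .head (x := x) hxy h => by
      obtain ⟨seq, h0, hseq⟩ := h.exists_seq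
      refine ⟨fun l => Nat.casesOn l x seq, rfl, ?_⟩
      rintro (_ | l) hl
      · simpa [h0] using hxy
      · exact hseq l (by omega)

theorem add_nsmul {M : Type*} [AddCommMonoid M] {r : M → M → Prop} {x y : M}
    (h : ∀ ν, r (ν + x) (ν + y)) : ∀ (m : ℕ) (ν : M), ReachesIn r m (ν + m • x) (ν + m • y)
  | 0, ν => by simpa using refl ν
  | m + 1, ν => by
      rw [succ_nsmul x m, succ_nsmul' y m, ← add_assoc, ← add_assoc]
      refine head ?_ (add_nsmul h m (ν + y))
      rw [add_right_comm ν y]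
      exact h _

end ReachesIn

theorem oStep_add_single {a b : ℕ+ → ℕ∞} {phi : ℕ+ → ℕ+} {i j : ℕ+} {p q : ℕ}
    (hphi : phi i = j) (ha : a i = p) (hb : b j = q) (ν : ℕ+ →₀ ℕ) :
    OStep a b phi (ν + Finsupp.single j q) (ν + Finsupp.single i p) := by
  refine ⟨i, j, hphi, by simp [ha], by simp [hb], by simp [hb], fun l => ?_⟩
  rcases eq_or_ne l j with rfl | hj
  · rcases eq_or_ne l i with rfl | hi
    · simp [ha, hb]
      omega
    · simp [Finsupp.single_eq_of_ne hi, hi, hb]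
  · simp [Finsupp.single_apply, hj, ha, @eq_comm _ i l]

theorem psize_single (i : ℕ+) (c : ℕ) : psize (Finsupp.single i c) = i * c := by
  simp [psize]

theorem inA_single {a : ℕ+ → ℕ∞} {i : ℕ+} (hi : a i = ⊤) (ha : ∀ j, a j ≠ 0) (c : ℕ) :
    InA a (Finsupp.single i c) := by
  intro j
  rcases eq_or_ne i j with rfl | hij
  · simp [hi]
  · simpa [Finsupp.single_eq_of_ne' hij, pos_iff_ne_zero] using ha j

section PathGraph

variable (v : ℕ → ℕ+) (α β : ℕ → ℕ)

noncomputable def pathA (i : ℕ+) : ℕ∞ :=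
  match partialInv v i with
  | some (k + 1) => α k
  | _ => ⊤

noncomputable def pathB (i : ℕ+) : ℕ∞ :=
  match partialInv v i with
  | some k => β k
  | none => ⊤

noncomputable def pathPhi (i : ℕ+) : ℕ+ :=
  match partialInv v i with
  | some (k + 1) => v k
  | _ => i

variable {v α β}

theorem pathA_apply_zero (hv : Injective v) : pathA v α (v 0) = ⊤ := by
  simp [pathA, partialInv_left hv]

theorem pathA_apply_succ (hv : Injective v) (k : ℕ) : pathA v α (v (k + 1)) = α k := by
  simp [pathA, partialInv_left hv]

theorem pathB_apply (hv : Injective v) (k : ℕ) : pathB v β (v k) = β k := by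
  simp [pathB, partialInv_left hv]

theorem pathPhi_apply_succ (hv : Injective v) (k : ℕ) : pathPhi v (v (k + 1)) = v k := by
  simp [pathPhi, partialInv_left hv]

theorem pathA_ne_top_iff (hv : Injective v) {i : ℕ+} : pathA v α i ≠ ⊤ ↔ ∃ k, v (k + 1) = i := by
  simp only [← hv.isPartialInv _ i]
  rcases h : partialInv v i with _ | _ | k <;> simp [pathA, h]

theorem pathB_ne_top_iff (hv : Injective v) {i : ℕ+} : pathB v β i ≠ ⊤ ↔ ∃ k, v k = i := by
  simp only [← hv.isPartialInv _ i]
  rcases h : partialInv v i with _ | k <;> simp [pathB, h]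

theorem phiEquiv_path (hv : Injective v) (hα : ∀ k, α k ≠ 0) (hβ : ∀ k, β k ≠ 0)
    (hvαβ : ∀ k, (v (k + 1) : ℕ) * α k = v k * β k) :
    PhiEquiv (pathA v α) (pathB v β) (pathPhi v) := by
  refine ⟨fun i => ?_, fun i => ?_, ⟨?_, ?_, ?_⟩, ?_⟩
  · rcases h : partialInv v i with _ | _ | k <;> simp [pathA, h, hα]
  · rcases h : partialInv v i with _ | k <;> simp [pathB, h, hβ]
  · intro i hi
    obtain ⟨k, rfl⟩ := (pathA_ne_top_iff hv).1 hi
    show pathB v β _ ≠ ⊤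
    rw [pathPhi_apply_succ hv, pathB_ne_top_iff hv]
    exact ⟨k, rfl⟩
  · intro i hi i' hi' h
    obtain ⟨k, rfl⟩ := (pathA_ne_top_iff hv).1 hi
    obtain ⟨l, rfl⟩ := (pathA_ne_top_iff hv).1 hi'
    rw [pathPhi_apply_succ hv, pathPhi_apply_succ hv] at h
    rw [hv h]
  · intro j hj
    obtain ⟨k, rfl⟩ := (pathB_ne_top_iff hv).1 hj
    exact ⟨v (k + 1), (pathA_ne_top_iff hv).2 ⟨k, rfl⟩, pathPhi_apply_succ hv k⟩
  · intro i hi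
    obtain ⟨k, rfl⟩ := (pathA_ne_top_iff hv).1 hi
    rw [pathA_apply_succ hv, pathPhi_apply_succ hv, pathB_apply hv]
    exact_mod_cast hvαβ k

theorem isPathGraph_path (hv : Injective v) : IsPathGraph (pathA v α) (pathB v β) (pathPhi v) := by
  refine ⟨Set.Ici 0, fun z => v z.toNat, Set.ordConnected_Ici, ?_, ?_, ?_, ?_⟩
  · intro z hz z' hz' h
    have := hv h
    simp only [Set.mem_Ici] at hz hz'
    omega
  · ext i
    simp only [Set.mem_image, Set.mem_Ici, Set.mem_union, Set.mem_ofPred_eq,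
      pathA_ne_top_iff hv, pathB_ne_top_iff hv]
    constructor
    · rintro ⟨z, -, rfl⟩
      exact Or.inr ⟨_, rfl⟩
    · rintro (⟨k, rfl⟩ | ⟨k, rfl⟩)
      · exact ⟨k + 1, by omega, rfl⟩
      · exact ⟨k, by omega, rfl⟩
  · intro z hz _
    simp only [Set.mem_Ici] at hz
    show pathPhi v (v (z + 1).toNat) = v z.toNat
    rw [show (z + 1).toNat = z.toNat + 1 by omega, pathPhi_apply_succ hv]
  · intro i hi
    obtain ⟨k, rfl⟩ := (pathA_ne_top_iff hv).1 hi
    exact ⟨k + 1, Set.mem_Ici.2 (by omega), rfl, Set.mem_Ici.2 (by omega)⟩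

theorem reachesIn_pathEdge (hv : Injective v) (k m : ℕ) :
    ReachesIn (OStep (pathA v α) (pathB v β) (pathPhi v)) m
      (Finsupp.single (v k) (m * β k)) (Finsupp.single (v (k + 1)) (m * α k)) := by
  simpa [Finsupp.smul_single] using ReachesIn.add_nsmul
    (oStep_add_single (pathPhi_apply_succ hv k) (pathA_apply_succ hv k) (pathB_apply hv k)) m 0

theorem reachesIn_path (hv : Injective v) (hvαβ : ∀ k, (v (k + 1) : ℕ) * α k = v k * β k)
    (n : ℕ) : ∀ K, (∀ k < K, (v k : ℕ) * β k ∣ n) →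
    ReachesIn (OStep (pathA v α) (pathB v β) (pathPhi v)) (∑ k ∈ range K, n / (v k * β k))
      (Finsupp.single (v 0) (n / v 0)) (Finsupp.single (v K) (n / v K))
  | 0, _ => by simpa using .refl _
  | K + 1, hn => by
    have hm := (Nat.mul_div_cancel' (hn K K.lt_succ_self)).symm
    set m := n / (v K * β K)
    have hK : n / v K = m * β K := by
      rw [hm, mul_assoc, Nat.mul_div_cancel_left _ (v K).pos, mul_comm]
    have hK1 : n / v (K + 1) = m * α K := by
      rw [hm, ← hvαβ, mul_assoc, Nat.mul_div_cancel_left _ (v (K + 1)).pos, mul_comm]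
    rw [sum_range_succ, hK1]
    refine (reachesIn_path hv hvαβ n K fun k hk => hn k (by omega)).trans ?_
    rw [hK]
    exact reachesIn_pathEdge hv K m

end PathGraph

theorem Finset.sum_range_comp_two_mul_le (f : ℕ → ℕ) (m : ℕ) :
    ∑ t ∈ range m, f (2 * t) ≤ ∑ k ∈ range (2 * m), f k := by
  induction m with
  | zero => simp
  | succ m ih =>
    rw [sum_range_succ, show 2 * (m + 1) = 2 * m + 1 + 1 by ring, sum_range_succ, sum_range_succ]
    omega

theorem Real.log_log_le_two_mul_log {x y : ℝ} {m : ℕ} (hx : 1 < x) (hy : 1 ≤ y)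
    (hxy : x ≤ y ^ m) (hm : (m : ℝ) ≤ y) : log (log x) ≤ 2 * log y := by
  have hlogx : 0 < log x := log_pos hx
  have hlogy : 0 ≤ log y := log_nonneg hy
  have hlogx_le : log x ≤ m * log y := by simpa using log_le_log (by linarith) hxy
  have hlogy_le : log y ≤ y := (log_le_sub_one_of_pos (by linarith)).trans (by linarith)
  calc log (log x) ≤ log (y ^ 2) := log_le_log hlogx (by nlinarith)
    _ = 2 * log y := by simp

def slowVertex (k : ℕ) : ℕ+ := ⟨if k % 2 = 0 then k + 3 else 2 * k + 4, by split_ifs <;> omega⟩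

def slowA (k : ℕ) : ℕ := if k % 2 = 0 then 1 else 2 * k + 4

def slowB (k : ℕ) : ℕ := if k % 2 = 0 then 2 else k + 4

theorem slowVertex_coe (k : ℕ) :
    (slowVertex k : ℕ) = if k % 2 = 0 then k + 3 else 2 * k + 4 := rfl

theorem slowVertex_injective : Injective slowVertex := by
  intro k l h
  have := congrArg (fun x : ℕ+ => (x : ℕ)) h
  simp only [slowVertex_coe] at this
  split_ifs at this <;> omega

theorem slowA_ne_zero (k : ℕ) : slowA k ≠ 0 := by
  unfold slowA; split_ifs <;> omega

theorem slowB_ne_zero (k : ℕ) : slowB k ≠ 0 := by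
  unfold slowB; split_ifs <;> omega

theorem slowVertex_succ_mul_slowA (k : ℕ) :
    (slowVertex (k + 1) : ℕ) * slowA k = slowVertex k * slowB k := by
  simp only [slowVertex_coe, slowA, slowB]
  split_ifs <;> first | omega | ring

theorem slowVertex_mul_slowB_two_mul (t : ℕ) :
    (slowVertex (2 * t) : ℕ) * slowB (2 * t) = 4 * t + 6 := by
  simp only [slowVertex_coe, slowB, Nat.mul_mod_right, if_true]
  ring

theorem le_slowVertex (k : ℕ) : k + 3 ≤ slowVertex k := by
  rw [slowVertex_coe]; split_ifs <;> omega

theorem slowVertex_mul_slowB_le {k m : ℕ} (hm : 1 ≤ m) (hk : k < 2 * m) :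
    (slowVertex k : ℕ) * slowB k ≤ (m + 1) ^ 5 := by
  have hv : (slowVertex k : ℕ) ≤ 4 * m + 2 := by rw [slowVertex_coe]; split_ifs <;> omega
  have hb : slowB k ≤ 2 * m + 3 := by unfold slowB; split_ifs <;> omega
  have h8 : 2 ^ 3 ≤ (m + 1) ^ 3 := Nat.pow_le_pow_left (by omega) 3
  calc (slowVertex k : ℕ) * slowB k ≤ (4 * m + 2) * (2 * m + 3) := Nat.mul_le_mul hv hb
    _ ≤ 2 ^ 3 * (m + 1) ^ 2 := by nlinarith
    _ ≤ (m + 1) ^ 3 * (m + 1) ^ 2 := Nat.mul_le_mul_right _ h8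
    _ = (m + 1) ^ 5 := by ring

def slowSize (m : ℕ) : ℕ := ∏ k ∈ range (2 * m), (slowVertex k : ℕ) * slowB k

theorem dvd_slowSize {k m : ℕ} (hk : k < 2 * m) : (slowVertex k : ℕ) * slowB k ∣ slowSize m :=
  dvd_prod_of_mem _ (mem_range.2 hk)

theorem lt_slowSize {m : ℕ} (hm : 1 ≤ m) : 2 * m + 1 < slowSize m := by
  have hlast : 2 * m - 1 ∈ range (2 * m) := mem_range.2 (by omega)
  calc 2 * m + 1 < slowVertex (2 * m - 1) := by have := le_slowVertex (2 * m - 1); omega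
    _ ≤ (slowVertex (2 * m - 1) : ℕ) * slowB (2 * m - 1) :=
      Nat.le_mul_of_pos_right _ (Nat.pos_of_ne_zero (slowB_ne_zero _))
    _ ≤ slowSize m := single_le_prod' (f := fun k => (slowVertex k : ℕ) * slowB k)
      (fun k _ => Nat.mul_pos (slowVertex k).pos (Nat.pos_of_ne_zero (slowB_ne_zero k))) hlast

theorem log_log_slowSize_le {m : ℕ} (hm : 1 ≤ m) :
    Real.log (Real.log (slowSize m)) ≤ 10 * Real.log (m + 1) := by
  have hsize : slowSize m ≤ ((m + 1) ^ 5) ^ (2 * m) := by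
    have := prod_le_pow_card (range (2 * m)) _ _ fun k hk =>
      slowVertex_mul_slowB_le hm (mem_range.1 hk)
    rwa [card_range] at this
  have hexp : 2 * m ≤ (m + 1) ^ 5 :=
    calc 2 * m ≤ (m + 1) ^ 2 := by nlinarith
      _ ≤ (m + 1) ^ 5 := Nat.pow_le_pow_right (by omega) (by norm_num)
  have hsize_gt : 1 < slowSize m := (lt_slowSize hm).trans' (by omega)
  have := Real.log_log_le_two_mul_log (x := slowSize m) (y := ((m + 1) ^ 5 : ℕ))
    (by exact_mod_cast hsize_gt) (by exact_mod_cast Nat.one_le_pow _ _ (by omega))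
    (by exact_mod_cast hsize) (by exact_mod_cast hexp)
  rw [Nat.cast_pow, Real.log_pow] at this
  push_cast at this
  linarith

theorem log_mul_le_sum_slowSteps (n m : ℕ)
    (hn : ∀ k < 2 * m, (slowVertex k : ℕ) * slowB k ∣ n) :
    n / 6 * Real.log (m + 1) ≤
      ((∑ k ∈ range (2 * m), n / ((slowVertex k : ℕ) * slowB k) : ℕ) : ℝ) := by
  have hharmonic : Real.log (m + 1) ≤ ∑ t ∈ range m, ((t : ℝ) + 1)⁻¹ := by
    simpa [harmonic] using log_add_one_le_harmonic m
  have hterm : ∀ t ∈ range m,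
      n / 6 * ((t : ℝ) + 1)⁻¹ ≤ ((n / ((slowVertex (2 * t) : ℕ) * slowB (2 * t)) : ℕ) : ℝ) := by
    intro t ht
    have hdvd := hn (2 * t) (by have := mem_range.1 ht; omega)
    rw [slowVertex_mul_slowB_two_mul] at hdvd ⊢
    rw [Nat.cast_div hdvd (by positivity), ← div_eq_mul_inv, div_div]
    push_cast
    gcongr
    linarith
  calc n / 6 * Real.log (m + 1) ≤ n / 6 * ∑ t ∈ range m, ((t : ℝ) + 1)⁻¹ := by gcongr
    _ ≤ ∑ t ∈ range m, ((n / ((slowVertex (2 * t) : ℕ) * slowB (2 * t)) : ℕ) : ℝ) := by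
      rw [mul_sum]; exact sum_le_sum hterm
    _ ≤ _ := by
      rw [← Nat.cast_sum]
      exact_mod_cast sum_range_comp_two_mul_le (fun k => n / ((slowVertex k : ℕ) * slowB k)) m

/-- there are `φ`-equivalent sequences `a, b` with `G_φ` a
path and a constant `c > 0` such that for infinitely many `n` some
`λ ∈ 𝒜_n` admits a rewrite sequence of length at least `c·n·log(log n)`. -/
theorem ohara_path_lower_bound :
    ∃ (a b : ℕ+ → ℕ∞) (phi : ℕ+ → ℕ+),
      PhiEquiv a b phi ∧ IsPathGraph a b phi ∧
      ∃ c : ℝ, 0 < c ∧ ∀ N : ℕ, ∃ n : ℕ, N ≤ n ∧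
        ∃ lam : ℕ+ →₀ ℕ, InA a lam ∧ psize lam = n ∧
          ∃ (seq : ℕ → (ℕ+ →₀ ℕ)) (k : ℕ), seq 0 = lam ∧
            (∀ l < k, OStep a b phi (seq l) (seq (l + 1))) ∧
            c * n * Real.log (Real.log n) ≤ (k : ℝ) := by
  have hphi := phiEquiv_path slowVertex_injective slowA_ne_zero slowB_ne_zero
    slowVertex_succ_mul_slowA
  refine ⟨_, _, _, hphi, isPathGraph_path slowVertex_injective, 1 / 60, by norm_num, fun N => ?_⟩
  set m := N + 1
  obtain ⟨seq, hseq0, hseq⟩ := (reachesIn_path slowVertex_injective slowVertex_succ_mul_slowA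
    (slowSize m) (2 * m) fun k => dvd_slowSize).exists_seq
  refine ⟨slowSize m, (lt_slowSize (by omega)).le.trans' (by omega), _,
    inA_single (pathA_apply_zero slowVertex_injective) hphi.1 _, ?_, seq, _, hseq0, hseq, ?_⟩
  · rw [psize_single, Nat.mul_div_cancel']
    exact (dvd_mul_right _ _).trans (dvd_slowSize (by omega))
  · calc 1 / 60 * (slowSize m : ℝ) * Real.log (Real.log (slowSize m))
        ≤ 1 / 60 * slowSize m * (10 * Real.log (m + 1)) := by
          gcongr; exact_mod_cast log_log_slowSize_le (by omega)
      _ = slowSize m / 6 * Real.log (m + 1) := by ring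
      _ ≤ _ := by exact_mod_cast log_mul_le_sum_slowSteps (slowSize m) m fun k => dvd_slowSize
end

section
/- Assume additionally that i_1,…,i_m, a_1,…,a_m, b_1,…,b_m are positive integers, and let t ∈ P ∩ ℤ^m. Let A be the m×m integer matrix with diagonal entries A_{j,j} = −b_j, entries A_{j,j+1} = a_j just above the diagonal (indices taken modulo m, so A_{m,1} = a_m), and all other entries 0. Then there is a unique vector k ∈ ℤ^m minimizing k_1 + ⋯ + k_m subject to the constraints k ≥ 0, A·k ≥ −t, and A·k ≤ b − 1 − t (all inequalities coordinatewise, where 1 = (1,…,1)), and ψ(t) = t + A·k. -/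
open scoped BigOperators

/-- One step `s → s'` of the continuous O'Hara algorithm on `ℝ^m`:
for some index `j` with `s_j ≥ b_j`, subtract `b_j` from the `j`-th
coordinate and add `a_{j-1}` to the `(j-1)`-st coordinate
(indices cyclically modulo `m`). -/
def CStep (m : ℕ) [NeZero m] (a b : Fin m → ℝ) (s s' : Fin m → ℝ) : Prop :=
  ∃ j : Fin m, b j ≤ s j ∧
    ∀ l, s' l = s l + (if l = j - 1 then a (j - 1) else 0)
                    - (if l = j then b j else 0)

/-- Membership in the half-open box `[0,a_1) × ⋯ × [0,a_m)`. -/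
def InBox {m : ℕ} (a : Fin m → ℝ) (t : Fin m → ℝ) : Prop :=
  ∀ j, 0 ≤ t j ∧ t j < a j

/-- The matrix `A` of O'Hara's algorithm: diagonal entries `-b_j`,
entries `a_j` just above the diagonal (cyclically, so `A_{m,1} = a_m`),
all other entries `0`.  (The two `if`s are added so that the definition is
also correct in the degenerate case `m = 1`, where `j = j + 1`.) -/
def oharaMatrix (m : ℕ) [NeZero m] (A B : Fin m → ℕ) :
    Matrix (Fin m) (Fin m) ℤ :=
  fun j l => (if l = j then -(B j : ℤ) else 0) + (if l = j + 1 then (A j : ℤ) else 0)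

/-!
Record a run of the O'Hara algorithm from `t` by the vector `c` counting how often each
coordinate has fired, so that the current vector is `t + A·c`. If `k' ≥ 0` and
`A·k' ≤ b - 1 - t`, no run can push `c` above `k'`: when `c ≤ k'` and `c_j = k'_j`, the
`j`-th coordinate of `t + A·c` is at most that of `t + A·k'`, hence below `b_j`, so `j`
cannot fire. The relations `i_j a_j = i_{j+1} b_{j+1}` give a positive kernel vector `g` of
`A`, and `k' = g - 1` is such a bound, so every run terminates. The final count vector `k`
is then below every feasible `k'`, which makes it the unique minimiser, and `ψ(t) = t + A·k`.
-/

open Matrix Relation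

theorem Relation.ReflTransGen.exists_seq {α : Type*} {r : α → α → Prop} {a b : α}
    (h : ReflTransGen r a b) :
    ∃ (s : ℕ → α) (n : ℕ), s 0 = a ∧ (∀ l < n, r (s l) (s (l + 1))) ∧ s n = b := by
  induction h using ReflTransGen.head_induction_on with
  | refl => exact ⟨fun _ => b, 0, rfl, by simp, rfl⟩
  | head hac _ ih =>
    obtain ⟨s, n, hs0, hs, hsn⟩ := ih
    refine ⟨fun | 0 => _ | l + 1 => s l, n + 1, rfl, ?_, hsn⟩
    rintro (_ | l) hl
    · simpa [hs0] using hac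
    · exact hs l (by omega)

namespace Ohara

variable {m : ℕ} [NeZero m]

theorem oharaMatrix_mulVec_apply (A B : Fin m → ℕ) (c : Fin m → ℤ) (j : Fin m) :
    (oharaMatrix m A B *ᵥ c) j = A j * c (j + 1) - B j * c j := by
  simp only [Matrix.mulVec, dotProduct, oharaMatrix, add_mul, ite_mul, zero_mul,
    Finset.sum_add_distrib, Finset.sum_ite_eq', Finset.mem_univ, if_true]
  ring

theorem exists_pos_oharaMatrix_mulVec_eq_zero {I A B : Fin m → ℕ}
    (hI : ∀ j, 0 < I j) (hB : ∀ j, 0 < B j)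
    (hiab : ∀ j : Fin m, I j * A j = I (j + 1) * B (j + 1)) :
    ∃ g : Fin m → ℤ, (∀ j, 0 < g j) ∧ oharaMatrix m A B *ᵥ g = 0 := by
  classical
  -- `g j = ∏_{l ≠ j} I_l B_l`, so that `I_j B_j g_j` is the full product.
  set f : Fin m → ℤ := fun l => I l * B l
  have hf : ∀ l, 0 < f l := fun l => by have := hI l; have := hB l; positivity
  refine ⟨fun j => ∏ l ∈ Finset.univ.erase j, f l,
    fun j => Finset.prod_pos fun l _ => hf l, funext fun j => ?_⟩
  have hprod : ∀ j, (∏ l ∈ Finset.univ.erase j, f l) * f j = ∏ l, f l :=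
    fun j => Finset.prod_erase_mul _ _ (Finset.mem_univ j)
  have hI' : (I j : ℤ) ≠ 0 := by have := hI j; positivity
  have hiab' : (I j * A j : ℤ) = I (j + 1) * B (j + 1) := by exact_mod_cast hiab j
  rw [oharaMatrix_mulVec_apply, Pi.zero_apply, sub_eq_zero]
  apply mul_left_cancel₀ hI'
  linear_combination (∏ l ∈ Finset.univ.erase (j + 1), f l) * hiab' + hprod (j + 1) - hprod j

variable (A B : Fin m → ℕ) (T : Fin m → ℤ)

/-- The O'Hara state reached from `T` after firing coordinate `j` exactly `c j` times. -/
def state (c : Fin m → ℤ) : Fin m → ℤ := T + oharaMatrix m A B *ᵥ c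

def Fires (c c' : Fin m → ℤ) : Prop :=
  ∃ j, (B j : ℤ) ≤ state A B T c j ∧ c' = c + Pi.single j 1

variable {A B T}

theorem state_apply (c : Fin m → ℤ) (j : Fin m) :
    state A B T c j = T j + A j * c (j + 1) - B j * c j := by
  rw [state, Pi.add_apply, oharaMatrix_mulVec_apply]; ring

theorem state_add_single (c : Fin m → ℤ) (j l : Fin m) :
    state A B T (c + Pi.single j 1) l =
      state A B T c l + (if l = j - 1 then (A (j - 1) : ℤ) else 0)
        - (if l = j then (B j : ℤ) else 0) := by
  have hA : (if l = j - 1 then (A (j - 1) : ℤ) else 0) =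
      if l = j - 1 then (A l : ℤ) else 0 := by
    split_ifs with h <;> simp [h]
  rw [hA]
  simp only [state_apply, Pi.add_apply, Pi.single_apply, ← eq_sub_iff_add_eq]
  split_ifs <;> subst_vars <;> ring

theorem Fires.cStep {c c' : Fin m → ℤ} (h : Fires A B T c c') :
    CStep m (fun j => A j) (fun j => B j)
      (fun l => state A B T c l) (fun l => state A B T c' l) := by
  obtain ⟨j, hj, rfl⟩ := h
  refine ⟨j, show (B j : ℝ) ≤ (state A B T c j : ℝ) by exact_mod_cast hj, fun l => ?_⟩
  simp only [state_add_single]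
  push_cast
  split_ifs <;> ring

theorem Fires.state_nonneg {c c' : Fin m → ℤ} (h : Fires A B T c c')
    (hc : ∀ j, 0 ≤ state A B T c j) (l : Fin m) : 0 ≤ state A B T c' l := by
  obtain ⟨j, hj, rfl⟩ := h
  have := hc l
  have := Int.natCast_nonneg (A (j - 1))
  rw [state_add_single]
  split_ifs with h1 h2 h2 <;> (try subst h2) <;> omega

theorem Fires.le_of_le {c c' K : Fin m → ℤ} (h : Fires A B T c c') (hcK : c ≤ K)
    (hK : ∀ j, state A B T K j < B j) : c' ≤ K := by
  obtain ⟨j, hj, rfl⟩ := h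
  intro l
  rw [Pi.add_apply, Pi.single_apply]
  split_ifs with hl
  · subst hl
    refine Int.add_one_le_of_lt (lt_of_le_of_ne (hcK l) fun heq => ?_)
    have := hK l
    rw [state_apply] at hj this
    nlinarith [hcK (l + 1), Int.natCast_nonneg (A l)]
  · simpa using hcK l

theorem le_of_reflTransGen {c c' : Fin m → ℤ} (h : ReflTransGen (Fires A B T) c c') :
    c ≤ c' := by
  induction h with
  | refl => exact le_rfl
  | tail _ hstep ih =>
    obtain ⟨j, -, rfl⟩ := hstep
    exact ih.trans (le_add_of_nonneg_right (Pi.single_nonneg.2 zero_le_one))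

theorem state_nonneg_of_reflTransGen {c c' : Fin m → ℤ} (h : ReflTransGen (Fires A B T) c c')
    (hc : ∀ j, 0 ≤ state A B T c j) (l : Fin m) : 0 ≤ state A B T c' l := by
  induction h generalizing l with
  | refl => exact hc l
  | tail _ hstep ih => exact hstep.state_nonneg ih l

theorem le_of_reflTransGen_of_le {c c' K : Fin m → ℤ} (h : ReflTransGen (Fires A B T) c c')
    (hcK : c ≤ K) (hK : ∀ j, state A B T K j < B j) : c' ≤ K := by
  induction h with
  | refl => exact hcK
  | tail _ hstep ih => exact hstep.le_of_le ih hK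

theorem exists_normal_of_le {K : Fin m → ℤ} (hK : ∀ j, state A B T K j < B j)
    (c : Fin m → ℤ) (hcK : c ≤ K) :
    ∃ k, ReflTransGen (Fires A B T) c k ∧ ∀ j, state A B T k j < B j := by
  induction hn : (∑ j, (K j - c j)).toNat using Nat.strong_induction_on generalizing c with
  | _ n ih =>
  by_cases hnormal : ∀ j, state A B T c j < B j
  · exact ⟨c, .refl, hnormal⟩
  push Not at hnormal
  obtain ⟨j, hj⟩ := hnormal
  set c' : Fin m → ℤ := c + Pi.single j 1
  have hfire : Fires A B T c c' := ⟨j, hj, rfl⟩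
  have hc'K : c' ≤ K := hfire.le_of_le hcK hK
  have hsum : ∑ l, c' l = ∑ l, c l + 1 := by simp [c', Finset.sum_add_distrib]
  have hpos : 0 ≤ ∑ l, (K l - c' l) := Finset.sum_nonneg fun l _ => sub_nonneg.2 (hc'K l)
  have hlt : (∑ l, (K l - c' l)).toNat < n := by
    rw [Finset.sum_sub_distrib] at hn hpos ⊢
    omega
  obtain ⟨k, hreach, hk⟩ := ih _ hlt c' hc'K rfl
  exact ⟨k, .head hfire hreach, hk⟩

theorem state_sub_one_lt {g : Fin m → ℤ} (hg : oharaMatrix m A B *ᵥ g = 0)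
    (hT : ∀ j, T j < A j) (j : Fin m) : state A B T (g - 1) j < B j := by
  have hgj : (A j : ℤ) * g (j + 1) = B j * g j := by
    simpa [oharaMatrix_mulVec_apply, sub_eq_zero] using congrFun hg j
  rw [state_apply, Pi.sub_apply, Pi.sub_apply, Pi.one_apply, Pi.one_apply]
  linarith [hT j]

theorem exists_reflTransGen_normal {I : Fin m → ℕ} (hI : ∀ j, 0 < I j) (hB : ∀ j, 0 < B j)
    (hiab : ∀ j : Fin m, I j * A j = I (j + 1) * B (j + 1)) (hT : ∀ j, T j < A j) :
    ∃ k, ReflTransGen (Fires A B T) 0 k ∧ ∀ j, state A B T k j < B j := by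
  obtain ⟨g, hg, hMg⟩ := exists_pos_oharaMatrix_mulVec_eq_zero hI hB hiab
  exact exists_normal_of_le (state_sub_one_lt hMg hT) 0 fun j => Int.sub_nonneg_of_le (hg j)

theorem neg_le_mulVec_iff (c : Fin m → ℤ) (j : Fin m) :
    -(T j) ≤ (oharaMatrix m A B *ᵥ c) j ↔ 0 ≤ state A B T c j := by
  rw [state, Pi.add_apply, neg_le_iff_add_nonneg']

theorem mulVec_le_iff (c : Fin m → ℤ) (j : Fin m) :
    (oharaMatrix m A B *ᵥ c) j ≤ B j - 1 - T j ↔ state A B T c j < B j := by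
  rw [state, Pi.add_apply]; omega

end Ohara

open Ohara in
theorem ohara_integer_program_general {m : ℕ} [NeZero m] (I A B : Fin m → ℕ)
    (hI : ∀ j, 0 < I j) (hB : ∀ j, 0 < B j)
    (hiab : ∀ j : Fin m, I j * A j = I (j + 1) * B (j + 1))
    (psi : (Fin m → ℝ) → (Fin m → ℝ))
    (hpsi : ∀ t, InBox (fun j => (A j : ℝ)) t →
      ∀ (s : ℕ → Fin m → ℝ) (k : ℕ), s 0 = t →
      (∀ l < k, CStep m (fun j => (A j : ℝ)) (fun j => (B j : ℝ))
        (s l) (s (l + 1))) →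
      (∀ j, s k j < (B j : ℝ)) → psi t = s k)
    (T : Fin m → ℤ) (hT : ∀ j, 0 ≤ T j ∧ T j < (A j : ℤ)) :
    ∃ k : Fin m → ℤ,
      ((∀ j, 0 ≤ k j) ∧
       (∀ j, -(T j) ≤ (oharaMatrix m A B).mulVec k j) ∧
       (∀ j, (oharaMatrix m A B).mulVec k j ≤ (B j : ℤ) - 1 - T j) ∧
       (∀ k' : Fin m → ℤ,
         (∀ j, 0 ≤ k' j) →
         (∀ j, -(T j) ≤ (oharaMatrix m A B).mulVec k' j) →
         (∀ j, (oharaMatrix m A B).mulVec k' j ≤ (B j : ℤ) - 1 - T j) →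
         (∑ j, k j) ≤ ∑ j, k' j)) ∧
      (∀ k' : Fin m → ℤ,
         ((∀ j, 0 ≤ k' j) ∧
          (∀ j, -(T j) ≤ (oharaMatrix m A B).mulVec k' j) ∧
          (∀ j, (oharaMatrix m A B).mulVec k' j ≤ (B j : ℤ) - 1 - T j) ∧
          (∀ k'' : Fin m → ℤ,
            (∀ j, 0 ≤ k'' j) →
            (∀ j, -(T j) ≤ (oharaMatrix m A B).mulVec k'' j) →
            (∀ j, (oharaMatrix m A B).mulVec k'' j ≤ (B j : ℤ) - 1 - T j) →
            (∑ j, k' j) ≤ ∑ j, k'' j)) → k' = k) ∧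
      (∀ j, psi (fun l => (T l : ℝ)) j =
        (T j : ℝ) + (((oharaMatrix m A B).mulVec k j : ℤ) : ℝ)) := by
  obtain ⟨k, hreach, hk⟩ := exists_reflTransGen_normal hI hB hiab fun j => (hT j).2
  have hk0 : 0 ≤ k := le_of_reflTransGen hreach
  have hlow : ∀ j, -(T j) ≤ (oharaMatrix m A B *ᵥ k) j := fun j =>
    (neg_le_mulVec_iff k j).2 <| state_nonneg_of_reflTransGen hreach
      (fun j => by simpa [state] using (hT j).1) j
  have hup : ∀ j, (oharaMatrix m A B *ᵥ k) j ≤ B j - 1 - T j :=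
    fun j => (mulVec_le_iff k j).2 (hk j)
  have hleast :
      ∀ k', 0 ≤ k' → (∀ j, (oharaMatrix m A B *ᵥ k') j ≤ B j - 1 - T j) → k ≤ k' :=
    fun k' h0 hk' => le_of_reflTransGen_of_le hreach h0 fun j => (mulVec_le_iff k' j).1 (hk' j)
  have hmin : ∀ k', 0 ≤ k' → (∀ j, (oharaMatrix m A B *ᵥ k') j ≤ B j - 1 - T j) →
      ∑ j, k j ≤ ∑ j, k' j :=
    fun k' h0 hk' => Finset.sum_le_sum fun j _ => hleast k' h0 hk' j
  refine ⟨k, ⟨hk0, hlow, hup, fun k' h0 _ hk' => hmin k' h0 hk'⟩,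
    fun k' ⟨h0, _, hk', hmin'⟩ => ?_, ?_⟩
  · have hsum := le_antisymm (hmin k' h0 hk') (hmin' k hk0 hlow hup)
    exact funext fun j => ((Finset.sum_eq_sum_iff_of_le fun j _ => hleast k' h0 hk' j).1
      hsum j (Finset.mem_univ j)).symm
  · obtain ⟨s, n, hs0, hs, hsn⟩ := (hreach.lift (fun c j => (state A B T c j : ℝ))
      fun _ _ h => h.cStep).exists_seq
    have hbox : InBox (fun j => (A j : ℝ)) (fun j => (T j : ℝ)) := fun j =>
      ⟨Int.cast_nonneg (hT j).1, show (T j : ℝ) < (A j : ℤ) from Int.cast_lt.2 (hT j).2⟩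
    have hpsiT := hpsi _ hbox s n (by simpa [state] using hs0) hs
      (fun j => by simpa [hsn] using (Int.cast_lt (R := ℝ)).2 (hk j))
    intro j
    simp [hpsiT, hsn, state]

/-- O'Hara's map as an integer linear program.  For integer
data and an integer point `t ∈ P`, there is a unique `k ∈ ℤ^m` minimizing
`k_1 + ⋯ + k_m` subject to `k ≥ 0`, `A·k ≥ -t` and `A·k ≤ b - 1 - t`, and
`ψ(t) = t + A·k`.  Here `ψ t` is the common end of all maximal rewrite
sequences from `t`. -/
theorem ohara_integer_program {m : ℕ} [NeZero m] (I A B : Fin m → ℕ)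
    (hI : ∀ j, 0 < I j) (hA : ∀ j, 0 < A j) (hB : ∀ j, 0 < B j)
    (hiab : ∀ j : Fin m, I j * A j = I (j + 1) * B (j + 1))
    (psi : (Fin m → ℝ) → (Fin m → ℝ))
    (hpsi : ∀ t, InBox (fun j => (A j : ℝ)) t →
      ∀ (s : ℕ → Fin m → ℝ) (k : ℕ), s 0 = t →
      (∀ l < k, CStep m (fun j => (A j : ℝ)) (fun j => (B j : ℝ))
        (s l) (s (l + 1))) →
      (∀ j, s k j < (B j : ℝ)) → psi t = s k)
    (T : Fin m → ℤ) (hT : ∀ j, 0 ≤ T j ∧ T j < (A j : ℤ)) :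
    ∃ k : Fin m → ℤ,
      ((∀ j, 0 ≤ k j) ∧
       (∀ j, -(T j) ≤ (oharaMatrix m A B).mulVec k j) ∧
       (∀ j, (oharaMatrix m A B).mulVec k j ≤ (B j : ℤ) - 1 - T j) ∧
       (∀ k' : Fin m → ℤ,
         (∀ j, 0 ≤ k' j) →
         (∀ j, -(T j) ≤ (oharaMatrix m A B).mulVec k' j) →
         (∀ j, (oharaMatrix m A B).mulVec k' j ≤ (B j : ℤ) - 1 - T j) →
         (∑ j, k j) ≤ ∑ j, k' j)) ∧
      (∀ k' : Fin m → ℤ,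
         ((∀ j, 0 ≤ k' j) ∧
          (∀ j, -(T j) ≤ (oharaMatrix m A B).mulVec k' j) ∧
          (∀ j, (oharaMatrix m A B).mulVec k' j ≤ (B j : ℤ) - 1 - T j) ∧
          (∀ k'' : Fin m → ℤ,
            (∀ j, 0 ≤ k'' j) →
            (∀ j, -(T j) ≤ (oharaMatrix m A B).mulVec k'' j) →
            (∀ j, (oharaMatrix m A B).mulVec k'' j ≤ (B j : ℤ) - 1 - T j) →
            (∑ j, k' j) ≤ ∑ j, k'' j)) → k' = k) ∧
      (∀ j, psi (fun l => (T l : ℝ)) j =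
        (T j : ℝ) + (((oharaMatrix m A B).mulVec k j : ℤ) : ℝ)) :=
  ohara_integer_program_general I A B hI hB hiab psi hpsi T hT
end
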